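/- arXiv:2604.21248 — 2 statements merged into one kernel-verified Lean document; each statement's English description precedes it below -/
import Mathlib

section
/- Let a, b be nonzero vectors in ℝ² that are linearly independent. Then the matrix (1/‖a‖)(I₂ - a aᵀ/‖a‖²) + (1/‖b‖)(I₂ - b bᵀ/‖b‖²) is positive definite. -/
open Matrix

/-- The projection-type matrix `(1/‖b‖)(I₂ - b bᵀ/‖b‖²)`. -/
noncomputable def projMat (b : EuclideanSpace ℝ (Fin 2)) : Matrix (Fin 2) (Fin 2) ℝ :=
  ‖b‖⁻¹ • ((1 : Matrix (Fin 2) (Fin 2) ℝ) - (‖b‖ ^ 2)⁻¹ • Matrix.of (fun i j => b i * b j))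

lemma projMat_herm (b : EuclideanSpace ℝ (Fin 2)) : (projMat b).IsHermitian := by
  unfold Matrix.IsHermitian
  ext i j
  by_cases h : i = j <;>
    simp [projMat, Matrix.conjTranspose_apply, Matrix.one_apply, h, Ne.symm, mul_comm]

lemma norm_sq_eq (u : EuclideanSpace ℝ (Fin 2)) : ‖u‖ ^ 2 = u 0 ^ 2 + u 1 ^ 2 := by
  rw [EuclideanSpace.norm_eq, Real.sq_sqrt (by positivity)]
  simp [Fin.sum_univ_two]

lemma inner_eq (u v : EuclideanSpace ℝ (Fin 2)) :
    (inner ℝ u v : ℝ) = u 0 * v 0 + u 1 * v 1 := by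
  simp [PiLp.inner_apply, Fin.sum_univ_two, mul_comm]

lemma quad_eq (u : EuclideanSpace ℝ (Fin 2)) (x : Fin 2 → ℝ) :
    star x ⬝ᵥ (projMat u *ᵥ x) =
    ‖u‖⁻¹ * ((x 0 ^ 2 + x 1 ^ 2) - (‖u‖ ^ 2)⁻¹ * (u 0 * x 0 + u 1 * x 1) ^ 2) := by
  simp [projMat, dotProduct, mulVec, Matrix.smul_apply, Matrix.sub_apply, Matrix.one_apply,
    Fin.sum_univ_two]
  ring

/-- The quadratic form of `projMat u` is nonnegative, and strictly positive if `x` is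
not a scalar multiple relation partner of `u`. -/
lemma quad_nonneg (u : EuclideanSpace ℝ (Fin 2)) (hu : u ≠ 0) (x : EuclideanSpace ℝ (Fin 2)) :
    0 ≤ star (x : Fin 2 → ℝ) ⬝ᵥ (projMat u *ᵥ (x : Fin 2 → ℝ)) := by
  rw [quad_eq]
  have hcs : (u 0 * x 0 + u 1 * x 1) ^ 2 ≤ ‖u‖ ^ 2 * (x 0 ^ 2 + x 1 ^ 2) := by
    have := real_inner_mul_inner_self_le u x
    rw [real_inner_self_eq_norm_sq, real_inner_self_eq_norm_sq, inner_eq, norm_sq_eq x] at this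
    nlinarith [this]
  have hn : (0:ℝ) < ‖u‖ := norm_pos_iff.2 hu
  have h2 : (0:ℝ) < ‖u‖ ^ 2 := by positivity
  have : (‖u‖ ^ 2)⁻¹ * (u 0 * x 0 + u 1 * x 1) ^ 2 ≤ x 0 ^ 2 + x 1 ^ 2 := by
    rw [inv_mul_le_iff₀ h2]
    linarith [hcs]
  have : 0 ≤ (x 0 ^ 2 + x 1 ^ 2) - (‖u‖ ^ 2)⁻¹ * (u 0 * x 0 + u 1 * x 1) ^ 2 := by linarith
  positivity

lemma quad_pos (u : EuclideanSpace ℝ (Fin 2)) (hu : u ≠ 0) (x : EuclideanSpace ℝ (Fin 2))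
    (hx : x ≠ 0) (hind : ∀ r : ℝ, x ≠ r • u) :
    0 < star (x : Fin 2 → ℝ) ⬝ᵥ (projMat u *ᵥ (x : Fin 2 → ℝ)) := by
  rw [quad_eq]
  have hcs : (u 0 * x 0 + u 1 * x 1) ^ 2 < ‖u‖ ^ 2 * (x 0 ^ 2 + x 1 ^ 2) := by
    have hlt : ‖(inner ℝ u x : ℝ)‖ < ‖u‖ * ‖x‖ := by
      rcases lt_or_eq_of_le (abs_real_inner_le_norm u x) with h | h
      · rwa [Real.norm_eq_abs]
      · exfalso
        rw [← Real.norm_eq_abs] at h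
        obtain ⟨r, _, hr⟩ := (norm_inner_eq_norm_iff hu hx).1 h
        exact hind r hr
    have h1 : |(inner ℝ u x : ℝ)| < ‖u‖ * ‖x‖ := hlt
    have h2 : (inner ℝ u x : ℝ) ^ 2 < (‖u‖ * ‖x‖) ^ 2 := by
      have hnn : (0:ℝ) ≤ ‖u‖ * ‖x‖ := by positivity
      nlinarith [abs_nonneg (inner ℝ u x : ℝ), sq_abs (inner ℝ u x : ℝ)]
    rw [inner_eq] at h2
    calc (u 0 * x 0 + u 1 * x 1) ^ 2 < (‖u‖ * ‖x‖) ^ 2 := h2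
      _ = ‖u‖ ^ 2 * ‖x‖ ^ 2 := by ring
      _ = ‖u‖ ^ 2 * (x 0 ^ 2 + x 1 ^ 2) := by rw [norm_sq_eq x]
  have hn : (0:ℝ) < ‖u‖ := norm_pos_iff.2 hu
  have h2 : (0:ℝ) < ‖u‖ ^ 2 := by positivity
  have : (‖u‖ ^ 2)⁻¹ * (u 0 * x 0 + u 1 * x 1) ^ 2 < x 0 ^ 2 + x 1 ^ 2 := by
    rw [inv_mul_lt_iff₀ h2]
    linarith [hcs]
  have h3 : 0 < (x 0 ^ 2 + x 1 ^ 2) - (‖u‖ ^ 2)⁻¹ * (u 0 * x 0 + u 1 * x 1) ^ 2 := by linarith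
  positivity

theorem stmt_3 (a b : EuclideanSpace ℝ (Fin 2)) (ha : a ≠ 0) (hb : b ≠ 0)
    (hab : LinearIndependent ℝ ![a, b]) :
    (projMat a + projMat b).PosDef := by
  rw [Matrix.posDef_iff_dotProduct_mulVec]
  constructor
  · exact (projMat_herm a).add (projMat_herm b)
  · intro x hx
    have hx' : (WithLp.toLp 2 x : EuclideanSpace ℝ (Fin 2)) ≠ 0 := by simpa using hx
    -- not both can be multiples
    have key : (∀ r : ℝ, (WithLp.toLp 2 x : EuclideanSpace ℝ (Fin 2)) ≠ r • a) ∨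
        (∀ r : ℝ, (WithLp.toLp 2 x : EuclideanSpace ℝ (Fin 2)) ≠ r • b) := by
      by_contra h
      push_neg at h
      obtain ⟨⟨r, hr⟩, ⟨s, hs⟩⟩ := h
      have hr0 : r ≠ 0 := by
        rintro rfl; simp at hr; exact hx hr
      have hs0 : s ≠ 0 := by
        rintro rfl; simp at hs; exact hx hs
      have : r • a + (-s) • b = 0 := by
        rw [neg_smul, ← hr, ← hs]; exact add_neg_cancel _
      obtain ⟨h1, h2⟩ := LinearIndependent.pair_iff.1 hab r (-s) this
      exact hr0 h1
    rw [Matrix.add_mulVec, dotProduct_add]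
    rcases key with h | h
    · have p1 := quad_pos a ha (WithLp.toLp 2 x) hx' h
      have p2 := quad_nonneg b hb (WithLp.toLp 2 x)
      linarith
    · have p1 := quad_nonneg a ha (WithLp.toLp 2 x)
      have p2 := quad_pos b hb (WithLp.toLp 2 x) hx' h
      linarith
end

section
/- Let t₁, t₂, t₃ ∈ ℝ² and let s ∈ ℝ² be distinct from each tᵢ with Σᵢ (s - tᵢ)/‖s - tᵢ‖ = 0. Then s is the unique global minimizer of J(x) = ‖x - t₁‖ + ‖x - t₂‖ + ‖x - t₃‖, provided t₁, t₂, t₃ are not collinear. -/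
open RealInnerProductSpace

private lemma aux_norm_u (s t : EuclideanSpace ℝ (Fin 2)) (hst : s ≠ t) :
    ‖(‖s - t‖⁻¹ • (s - t) : EuclideanSpace ℝ (Fin 2))‖ = 1 := by
  have hn : ‖s - t‖ ≠ 0 := norm_ne_zero_iff.mpr (sub_ne_zero.mpr hst)
  rw [norm_smul, norm_inv, norm_norm, inv_mul_cancel₀ hn]

private lemma aux_le (s t x : EuclideanSpace ℝ (Fin 2)) (hst : s ≠ t) :
    ⟪‖s - t‖⁻¹ • (s - t), x - t⟫ ≤ ‖x - t‖ := by
  calc ⟪‖s - t‖⁻¹ • (s - t), x - t⟫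
      ≤ ‖(‖s - t‖⁻¹ • (s - t) : EuclideanSpace ℝ (Fin 2))‖ * ‖x - t‖ := real_inner_le_norm _ _
    _ = ‖x - t‖ := by rw [aux_norm_u s t hst, one_mul]

private lemma aux_self (s t : EuclideanSpace ℝ (Fin 2)) (hst : s ≠ t) :
    ⟪‖s - t‖⁻¹ • (s - t), s - t⟫ = ‖s - t‖ := by
  have hn : ‖s - t‖ ≠ 0 := norm_ne_zero_iff.mpr (sub_ne_zero.mpr hst)
  rw [real_inner_smul_left, real_inner_self_eq_norm_sq, sq, inv_mul_cancel_left₀ hn]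

private lemma aux_eq (s t x : EuclideanSpace ℝ (Fin 2)) (hst : s ≠ t) (hxs : x ≠ s)
    (heq : ⟪‖s - t‖⁻¹ • (s - t), x - t⟫ = ‖x - t‖) :
    ∃ c : ℝ, t = c • (x - s) +ᵥ s := by
  have hn : ‖s - t‖ ≠ 0 := norm_ne_zero_iff.mpr (sub_ne_zero.mpr hst)
  set u : EuclideanSpace ℝ (Fin 2) := ‖s - t‖⁻¹ • (s - t) with hu
  have hnu : ‖u‖ = 1 := aux_norm_u s t hst
  have h1 : ⟪u, x - t⟫ = ‖u‖ * ‖x - t‖ := by rw [hnu, one_mul]; exact heq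
  have h2 : ‖x - t‖ • u = ‖u‖ • (x - t) := (inner_eq_norm_mul_iff_real).mp h1
  rw [hnu, one_smul] at h2
  set c : ℝ := ‖x - t‖ * ‖s - t‖⁻¹ with hc
  have h3 : x - t = c • (s - t) := by
    rw [← h2, hu, smul_smul]
  have h4 : x - s = (c - 1) • (s - t) := by
    have : x - s = (x - t) - (s - t) := by abel
    rw [this, h3, sub_smul, one_smul]
  have hc1 : c - 1 ≠ 0 := by
    intro h
    apply hxs
    rw [h, zero_smul] at h4
    exact sub_eq_zero.mp h4
  refine ⟨-(c - 1)⁻¹, ?_⟩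
  have h5 : s - t = (c - 1)⁻¹ • (x - s) := by
    rw [h4, smul_smul, inv_mul_cancel₀ hc1, one_smul]
  have : t = s - (c - 1)⁻¹ • (x - s) := by
    rw [← h5]; abel
  rw [this]
  simp only [vadd_eq_add, neg_smul]
  abel

theorem stmt_13 (t₁ t₂ t₃ s : EuclideanSpace ℝ (Fin 2))
    (h1 : s ≠ t₁) (h2 : s ≠ t₂) (h3 : s ≠ t₃)
    (hcol : ¬ Collinear ℝ ({t₁, t₂, t₃} : Set (EuclideanSpace ℝ (Fin 2))))
    (hstat : ‖s - t₁‖⁻¹ • (s - t₁) + ‖s - t₂‖⁻¹ • (s - t₂) + ‖s - t₃‖⁻¹ • (s - t₃) = 0) :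
    ∀ x : EuclideanSpace ℝ (Fin 2), x ≠ s →
      ‖s - t₁‖ + ‖s - t₂‖ + ‖s - t₃‖ < ‖x - t₁‖ + ‖x - t₂‖ + ‖x - t₃‖ := by
  intro x hx
  set u₁ : EuclideanSpace ℝ (Fin 2) := ‖s - t₁‖⁻¹ • (s - t₁) with hu₁
  set u₂ : EuclideanSpace ℝ (Fin 2) := ‖s - t₂‖⁻¹ • (s - t₂) with hu₂
  set u₃ : EuclideanSpace ℝ (Fin 2) := ‖s - t₃‖⁻¹ • (s - t₃) with hu₃
  have le₁ := aux_le s t₁ x h1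
  have le₂ := aux_le s t₂ x h2
  have le₃ := aux_le s t₃ x h3
  -- key identity: sum of inner products equals sum of distances from s
  have hsum : ⟪u₁, x - t₁⟫ + ⟪u₂, x - t₂⟫ + ⟪u₃, x - t₃⟫
      = ‖s - t₁‖ + ‖s - t₂‖ + ‖s - t₃‖ := by
    have e₁ : x - t₁ = (x - s) + (s - t₁) := by abel
    have e₂ : x - t₂ = (x - s) + (s - t₂) := by abel
    have e₃ : x - t₃ = (x - s) + (s - t₃) := by abel
    rw [e₁, e₂, e₃, inner_add_right, inner_add_right, inner_add_right,
      aux_self s t₁ h1, aux_self s t₂ h2, aux_self s t₃ h3]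
    have : ⟪u₁, x - s⟫ + ⟪u₂, x - s⟫ + ⟪u₃, x - s⟫
        = ⟪u₁ + u₂ + u₃, x - s⟫ := by
      rw [inner_add_left, inner_add_left]
    have hz : ⟪u₁, x - s⟫ + ⟪u₂, x - s⟫ + ⟪u₃, x - s⟫ = 0 := by
      rw [this, hstat, inner_zero_left]
    linarith
  -- not all equalities can hold
  have hne : ¬ (⟪u₁, x - t₁⟫ = ‖x - t₁‖ ∧ ⟪u₂, x - t₂⟫ = ‖x - t₂‖ ∧
      ⟪u₃, x - t₃⟫ = ‖x - t₃‖) := by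
    rintro ⟨e₁, e₂, e₃⟩
    obtain ⟨c₁, hc₁⟩ := aux_eq s t₁ x h1 hx e₁
    obtain ⟨c₂, hc₂⟩ := aux_eq s t₂ x h2 hx e₂
    obtain ⟨c₃, hc₃⟩ := aux_eq s t₃ x h3 hx e₃
    apply hcol
    rw [collinear_iff_exists_forall_eq_smul_vadd]
    refine ⟨s, x - s, ?_⟩
    intro q hq
    simp only [Set.mem_insert_iff, Set.mem_singleton_iff] at hq
    rcases hq with rfl | rfl | rfl
    · exact ⟨c₁, hc₁⟩
    · exact ⟨c₂, hc₂⟩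
    · exact ⟨c₃, hc₃⟩
  by_contra hcon
  push_neg at hcon
  have hsle : ‖x - t₁‖ + ‖x - t₂‖ + ‖x - t₃‖ ≤
      ⟪u₁, x - t₁⟫ + ⟪u₂, x - t₂⟫ + ⟪u₃, x - t₃⟫ := by linarith
  exact hne ⟨by linarith, by linarith, by linarith⟩
end
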